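/- arXiv:1305.4262 — 4 statements merged into one kernel-verified Lean document; each statement's English description precedes it below -/
import Mathlib

section
/- Let V and E be finite-dimensional real inner product spaces and let A : ℝⁿ → 𝓛(V; E) be the symbol of a homogeneous linear differential operator of order k, i.e. A(ξ) = ∑_{|α| = k} ξ^α A_α for some linear maps A_α ∈ 𝓛(V; E). Then there exist m ∈ ℕ and a map B : ℝⁿ → 𝓛(V; V) whose matrix entries are homogeneous polynomials of degree m in ξ, such that A(ξ) ∘ B(ξ) = 0 for every ξ ∈ ℝⁿ and max_{ξ ∈ ℝⁿ} dim B(ξ)[V] = min_{ξ ∈ ℝⁿ} dim ker A(ξ). -/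
open MeasureTheory ENNReal
open scoped NNReal RealInnerProductSpace

noncomputable section

/-- A homogeneous linear differential operator `A(D)` of order `k` from `V` to `E` on a
Euclidean space `X`, represented through its action `u ↦ A (D^k u)` on the `k`-th
iterated (Fréchet) derivative; this is equivalent to the data of a family of coefficients
`(A_α)_{|α| = k}`, `A_α ∈ 𝓛(V; E)`, acting by `A(D)u = ∑_{|α|=k} A_α (∂^α u)`. -/
abbrev DiffOperator (X : Type*) [NormedAddCommGroup X] [InnerProductSpace ℝ X]
    (k : ℕ) (V E : Type*) [NormedAddCommGroup V] [NormedSpace ℝ V]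
    [NormedAddCommGroup E] [NormedSpace ℝ E] :=
  ContinuousMultilinearMap ℝ (fun _ : Fin k => X) V →L[ℝ] E

namespace DiffOperator

variable {X : Type*} [NormedAddCommGroup X] [InnerProductSpace ℝ X]
  {k : ℕ} {V E : Type*} [NormedAddCommGroup V] [NormedSpace ℝ V]
  [NormedAddCommGroup E] [NormedSpace ℝ E]

/-- The action `A(D)u` of the differential operator on a function `u : X → V`. -/
noncomputable def app (A : DiffOperator X k V E) (u : X → V) (x : X) : E :=
  A (iteratedFDeriv ℝ k u x)

/-- The symbol `A(ξ) = ∑_{|α|=k} ξ^α A_α ∈ 𝓛(V; E)` of the operator: it sends `v : V` to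
`A` applied to the `k`-linear map `(w₁, …, w_k) ↦ (⟪ξ,w₁⟫ ⋯ ⟪ξ,w_k⟫) • v`. -/
noncomputable def symbol (A : DiffOperator X k V E) (ξ : X) : V →L[ℝ] E :=
  A.comp (((ContinuousMultilinearMap.compContinuousLinearMapL
      (fun _ : Fin k => innerSL ℝ ξ)).comp
    (ContinuousMultilinearMap.piFieldEquiv ℝ (Fin k)
      V).toContinuousLinearEquiv.toContinuousLinearMap))

/-- `A(D)` is elliptic if its symbol `A(ξ)` is injective for every `ξ ≠ 0`. -/
def IsElliptic (A : DiffOperator X k V E) : Prop :=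
  ∀ ξ : X, ξ ≠ 0 → Function.Injective (A.symbol ξ)

/-- `A(D)` is canceling if `⋂_{ξ ≠ 0} A(ξ)[V] = {0}`. -/
def IsCanceling (A : DiffOperator X k V E) : Prop :=
  (⋂ (ξ : X) (_ : ξ ≠ 0), Set.range (A.symbol ξ)) = {0}

end DiffOperator

/-- `u ∈ C_c^∞`: a smooth compactly supported function. -/
def IsTestFun {X V : Type*} [NormedAddCommGroup X] [NormedSpace ℝ X]
    [NormedAddCommGroup V] [NormedSpace ℝ V] (u : X → V) : Prop :=
  ContDiff ℝ (⊤ : ℕ∞) u ∧ HasCompactSupport u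

/-!
Let `r` be the least dimension of `ker A(ξ)` and `T(ξ) = A(ξ)* A(ξ)`, whose characteristic
polynomial `χ_ξ` is divisible by `X ^ r`. Take `B(ξ) = q_ξ(T(ξ))` with `q_ξ = χ_ξ / X ^ r`.
Cayley–Hamilton gives `T(ξ) ^ r B(ξ) = 0`; as `T(ξ)` is symmetric, hence semisimple,
`ker T(ξ) ^ r ⊆ ker T(ξ) = ker A(ξ)`, so `A(ξ) B(ξ) = 0`. Semisimplicity also makes the
multiplicity of the root `0` of `χ_ξ` equal to `dim ker A(ξ)`, so `q_ξ(0) ≠ 0` exactly when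
`dim ker A(ξ) = r`: then `B(ξ)` is multiplication by `q_ξ(0)` on `ker A(ξ)` and its range is
`ker A(ξ)`; otherwise `q_ξ = X p` and `B(ξ) = T(ξ) p(T(ξ)) = 0` by the same kernel argument.
In coordinates the entries of `T(ξ)` are homogeneous of degree `2k` in `ξ` and the coefficient of
`X ^ j` in `χ_ξ` is homogeneous of degree `2k (dim V - j)`, so `B(ξ) = ∑ⱼ c_{j+r}(ξ) T(ξ) ^ j` is
homogeneous of degree `2k (dim V - r)`.
-/

open Polynomial Module

namespace Polynomial

variable {R : Type*} [CommRing R]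

theorem coeff_divX_iterate (p : R[X]) (r j : ℕ) : (divX^[r] p).coeff j = p.coeff (j + r) := by
  induction r generalizing p with
  | zero => rfl
  | succ r ih => rw [Function.iterate_succ_apply, ih, coeff_divX, add_assoc]

theorem map_divX_iterate {S : Type*} [CommRing S] (f : R →+* S) (p : R[X]) (r : ℕ) :
    (divX^[r] p).map f = divX^[r] (p.map f) := by
  ext j
  simp only [coeff_map, coeff_divX_iterate]

theorem X_pow_mul_divX_iterate {p : R[X]} {r : ℕ} (h : X ^ r ∣ p) : X ^ r * divX^[r] p = p := by
  ext j
  rw [coeff_X_pow_mul', coeff_divX_iterate]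
  split_ifs with hj
  · rw [Nat.sub_add_cancel hj]
  · exact (X_pow_dvd_iff.mp h j (not_le.mp hj)).symm

end Polynomial

theorem LinearMap.X_pow_dvd_charpoly_of_le_finrank_ker {K M : Type*} [Field K] [AddCommGroup M]
    [Module K M] [FiniteDimensional K M] {T : Module.End K M} {r : ℕ}
    (hr : r ≤ finrank K (LinearMap.ker T)) : X ^ r ∣ T.charpoly := by
  have h := T.finrank_eigenspace_le 0
  rw [Module.End.eigenspace_zero] at h
  simpa using (le_rootMultiplicity_iff T.charpoly_monic.ne_zero).mp (hr.trans h)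

namespace Module.End.IsFinitelySemisimple

variable {K M : Type*} [Field K] [AddCommGroup M] [Module K M] {T : End K M}

theorem ker_pow_eq_ker (hT : T.IsFinitelySemisimple) {j : ℕ} (hj : j ≠ 0) :
    LinearMap.ker (T ^ j) = LinearMap.ker T := by
  have := hT.genEigenspace_eq_eigenspace 0 (k := j) (by exact_mod_cast Nat.pos_of_ne_zero hj)
  simpa [genEigenspace_nat, eigenspace_zero] using this

theorem mul_eq_zero_of_pow_mul_eq_zero (hT : T.IsFinitelySemisimple) {S : End K M} {j : ℕ}
    (h : T ^ j * S = 0) : T * S = 0 := by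
  rcases eq_or_ne j 0 with rfl | hj
  · rw [pow_zero, one_mul] at h
    rw [h, mul_zero]
  · ext v
    have hv : S v ∈ LinearMap.ker (T ^ j) := by simp [← Module.End.mul_apply, h]
    rw [hT.ker_pow_eq_ker hj] at hv
    simpa using hv

variable [FiniteDimensional K M] {r : ℕ} {q : K[X]}

theorem mul_aeval_eq_zero (hT : T.IsFinitelySemisimple) (hq : T.charpoly = X ^ r * q) :
    T * aeval T q = 0 := by
  refine hT.mul_eq_zero_of_pow_mul_eq_zero (j := r) ?_
  simpa [hq] using LinearMap.aeval_self_charpoly T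

theorem isRoot_zero_iff (hT : T.IsFinitelySemisimple) (hq : T.charpoly = X ^ r * q) :
    q.IsRoot 0 ↔ r < finrank K (LinearMap.ker T) := by
  have hq0 : q ≠ 0 := by
    rintro rfl
    exact T.charpoly_monic.ne_zero (by rw [hq, mul_zero])
  have hX : (X : K[X]) = X - C 0 := by rw [C_0, sub_zero]
  rw [← eigenspace_zero, ← hT.maxGenEigenspace_eq_eigenspace,
    LinearMap.finrank_maxGenEigenspace_eq, hq, mul_comm, hX, rootMultiplicity_mul_X_sub_C_pow hq0,
    lt_add_iff_pos_left, rootMultiplicity_pos hq0]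

theorem range_aeval_eq_ker (hT : T.IsFinitelySemisimple) (hq : T.charpoly = X ^ r * q)
    (hr : finrank K (LinearMap.ker T) = r) : LinearMap.range (aeval T q) = LinearMap.ker T := by
  have hq0 : q.eval 0 ≠ 0 := by simp [← IsRoot.def, hT.isRoot_zero_iff hq, hr]
  refine le_antisymm ?_ fun v hv => ⟨(q.eval 0)⁻¹ • v, ?_⟩
  · rintro _ ⟨v, rfl⟩
    rw [LinearMap.mem_ker, ← Module.End.mul_apply, hT.mul_aeval_eq_zero hq, LinearMap.zero_apply]
  · rw [map_smul, aeval_apply_of_mem_apply_eq_smul (μ := 0) (by simpa using hv), smul_smul,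
      inv_mul_cancel₀ hq0, one_smul]

theorem aeval_eq_zero (hT : T.IsFinitelySemisimple) (hq : T.charpoly = X ^ r * q)
    (hr : r < finrank K (LinearMap.ker T)) : aeval T q = 0 := by
  obtain ⟨p, rfl⟩ : X ∣ q := by
    rw [X_dvd_iff, coeff_zero_eq_eval_zero]
    exact (hT.isRoot_zero_iff hq).mpr hr
  have h2 : T ^ 2 * aeval T p = 0 := by
    rw [← hT.mul_aeval_eq_zero hq, map_mul, aeval_X, pow_two, mul_assoc]
  rw [map_mul, aeval_X, hT.mul_eq_zero_of_pow_mul_eq_zero h2]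

end Module.End.IsFinitelySemisimple

namespace LinearMap

variable {𝕜 V E : Type*} [RCLike 𝕜] [NormedAddCommGroup V] [InnerProductSpace 𝕜 V]
  [FiniteDimensional 𝕜 V] [NormedAddCommGroup E] [InnerProductSpace 𝕜 E] [FiniteDimensional 𝕜 E]

/-- `q(F* F)` for `q = χ / X ^ r`, `χ` the characteristic polynomial of `F* F`; `divX^[r]` drops
the `r` lowest coefficients, so the quotient is exact once `r ≤ dim ker F`. -/
def gramCharpolyQuot (F : V →ₗ[𝕜] E) (r : ℕ) : V →ₗ[𝕜] V :=
  aeval (adjoint F ∘ₗ F) (divX^[r] (adjoint F ∘ₗ F).charpoly)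

variable {F : V →ₗ[𝕜] E} {r : ℕ}

theorem charpoly_adjoint_comp_self_eq_X_pow_mul (hr : r ≤ finrank 𝕜 (ker F)) :
    (adjoint F ∘ₗ F).charpoly = X ^ r * divX^[r] (adjoint F ∘ₗ F).charpoly := by
  refine (X_pow_mul_divX_iterate (X_pow_dvd_charpoly_of_le_finrank_ker ?_)).symm
  rwa [ker_adjoint_comp_self]

theorem comp_gramCharpolyQuot (hr : r ≤ finrank 𝕜 (ker F)) : F ∘ₗ F.gramCharpolyQuot r = 0 := by
  rw [← range_le_ker_iff, ← ker_adjoint_comp_self, range_le_ker_iff]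
  exact (isSymmetric_adjoint_comp_self F).isFinitelySemisimple.mul_aeval_eq_zero
    (charpoly_adjoint_comp_self_eq_X_pow_mul hr)

theorem finrank_range_gramCharpolyQuot (hr : r ≤ finrank 𝕜 (ker F)) :
    finrank 𝕜 (range (F.gramCharpolyQuot r)) = if finrank 𝕜 (ker F) = r then r else 0 := by
  have hT := (isSymmetric_adjoint_comp_self F).isFinitelySemisimple
  have hq := charpoly_adjoint_comp_self_eq_X_pow_mul hr
  rw [← ker_adjoint_comp_self] at hr ⊢
  split_ifs with h
  · rw [gramCharpolyQuot, hT.range_aeval_eq_ker hq h, h]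
  · rw [gramCharpolyQuot, hT.aeval_eq_zero hq (lt_of_le_of_ne hr (Ne.symm h)), range_zero,
      finrank_bot]

open Matrix in
theorem toMatrix_gramCharpolyQuot {ι κ : Type*} [Fintype ι] [DecidableEq ι] [Fintype κ]
    [DecidableEq κ] (v₁ : OrthonormalBasis ι 𝕜 V) (v₂ : OrthonormalBasis κ 𝕜 E) :
    toMatrix v₁.toBasis v₁.toBasis (F.gramCharpolyQuot r) =
      aeval ((toMatrix v₁.toBasis v₂.toBasis F)ᴴ * toMatrix v₁.toBasis v₂.toBasis F)
        (divX^[r] ((toMatrix v₁.toBasis v₂.toBasis F)ᴴ *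
          toMatrix v₁.toBasis v₂.toBasis F).charpoly) := by
  have h : toMatrix v₁.toBasis v₁.toBasis (adjoint F ∘ₗ F) =
      (toMatrix v₁.toBasis v₂.toBasis F)ᴴ * toMatrix v₁.toBasis v₂.toBasis F := by
    rw [toMatrix_comp _ v₂.toBasis, toMatrix_adjoint]
  rw [← h, charpoly_toMatrix, gramCharpolyQuot]
  exact (aeval_algHom_apply (toMatrixAlgEquiv v₁.toBasis) _ _).symm

end LinearMap

namespace MvPolynomial

variable {R : Type*} [CommSemiring R] {n m : ℕ}

def homogeneousOfCoeffs (m : ℕ) (a : (Fin n → ℕ) → R) : MvPolynomial (Fin n) R :=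
  ∑ α ∈ Finset.Nat.antidiagonalTuple n m, monomial (Finsupp.equivFunOnFinite.symm α) (a α)

theorem isHomogeneous_homogeneousOfCoeffs (a : (Fin n → ℕ) → R) :
    (homogeneousOfCoeffs m a).IsHomogeneous m :=
  IsHomogeneous.sum _ _ _ fun α hα => isHomogeneous_monomial _ <| by
    simpa [Finsupp.degree_eq_sum] using Finset.Nat.mem_antidiagonalTuple.mp hα

theorem eval_homogeneousOfCoeffs (a : (Fin n → ℕ) → R) (x : Fin n → R) :
    eval x (homogeneousOfCoeffs m a) =
      ∑ α ∈ Finset.Nat.antidiagonalTuple n m, (∏ i, x i ^ α i) * a α := by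
  simp [homogeneousOfCoeffs, eval_monomial, Finsupp.prod_pow, mul_comm]

theorem IsHomogeneous.eq_homogeneousOfCoeffs {p : MvPolynomial (Fin n) R}
    (hp : p.IsHomogeneous m) :
    p = homogeneousOfCoeffs m fun α => p.coeff (Finsupp.equivFunOnFinite.symm α) := by
  ext δ
  simp only [homogeneousOfCoeffs, coeff_sum, coeff_monomial, Equiv.symm_apply_eq]
  rw [Finset.sum_ite_eq']
  split_ifs with hδ
  · simp
  · refine hp.coeff_eq_zero fun hdeg => hδ ?_
    simpa [Finset.Nat.mem_antidiagonalTuple, Finsupp.degree_eq_sum] using hdeg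

end MvPolynomial

namespace Matrix

section CommSemiring

variable {σ R ι κ : Type*} [CommSemiring R]

def IsHomogeneous (M : Matrix ι κ (MvPolynomial σ R)) (m : ℕ) : Prop :=
  ∀ i j, (M i j).IsHomogeneous m

namespace IsHomogeneous

variable {M : Matrix ι κ (MvPolynomial σ R)} {a b : ℕ}

theorem transpose (hM : M.IsHomogeneous a) : Mᵀ.IsHomogeneous a := fun i j => hM j i

theorem mul {ν : Type*} [Fintype κ] {N : Matrix κ ν (MvPolynomial σ R)} (hM : M.IsHomogeneous a)
    (hN : N.IsHomogeneous b) : (M * N).IsHomogeneous (a + b) :=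
  fun i j => MvPolynomial.IsHomogeneous.sum _ _ _ fun l _ => (hM i l).mul (hN l j)

theorem pow [Fintype ι] [DecidableEq ι] {M : Matrix ι ι (MvPolynomial σ R)}
    (hM : M.IsHomogeneous a) (j : ℕ) : (M ^ j).IsHomogeneous (a * j) := by
  induction j with
  | zero =>
    intro i l
    by_cases hil : i = l
    · simpa [hil] using MvPolynomial.isHomogeneous_one σ R
    · simpa [one_apply_ne hil] using MvPolynomial.isHomogeneous_zero σ R 0
  | succ j ih => simpa [pow_succ, mul_add] using ih.mul hM

theorem map_eval_eq_sum {n m : ℕ} {M : Matrix ι κ (MvPolynomial (Fin n) R)}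
    (hM : M.IsHomogeneous m) (x : Fin n → R) :
    M.map (MvPolynomial.eval x) = ∑ α ∈ Finset.Nat.antidiagonalTuple n m,
      (∏ i, x i ^ α i) • M.map (MvPolynomial.coeff (Finsupp.equivFunOnFinite.symm α)) := by
  ext i j
  rw [map_apply, (hM i j).eq_homogeneousOfCoeffs, MvPolynomial.eval_homogeneousOfCoeffs]
  simp [sum_apply]

end IsHomogeneous

end CommSemiring

section CommRing

variable {σ R ι : Type*} [CommRing R] [Fintype ι] [DecidableEq ι]

theorem map_aeval {S : Type*} [CommRing S] (f : R →+* S) (M : Matrix ι ι R) (p : R[X]) :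
    (aeval M p).map f = aeval (M.map f) (p.map f) := by
  change f.mapMatrix (eval₂ _ M p) = eval₂ _ _ _
  rw [hom_eval₂, eval₂_map]
  congr 1
  ext c : 1
  simp [algebraMap_eq_diagonal, diagonal_map f.map_zero]

theorem map_aeval_divX_iterate_charpoly {S : Type*} [CommRing S] (f : R →+* S)
    (M : Matrix ι ι R) (r : ℕ) :
    (aeval M (divX^[r] M.charpoly)).map f = aeval (M.map f) (divX^[r] (M.map f).charpoly) := by
  rw [map_aeval, map_divX_iterate, charpoly_map]

variable [Nontrivial R] {M : Matrix ι ι (MvPolynomial σ R)} {a : ℕ}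

theorem IsHomogeneous.coeff_charpoly (hM : M.IsHomogeneous a) (j : ℕ) :
    (M.charpoly.coeff j).IsHomogeneous (a * (Fintype.card ι - j)) := by
  rcases le_or_gt j (Fintype.card ι) with hj | hj
  · have hM' : M = of (Function.curry fun p : ι × ι => M p.1 p.2) := rfl
    rw [hM', ← charpoly.univ_coeff_eval₂Hom ι MvPolynomial.C]
    exact (charpoly.univ_coeff_isHomogeneous R ι j _ (by omega)).eval₂ _ _
      (fun _ => MvPolynomial.isHomogeneous_C _ _) fun p => hM p.1 p.2
  · rw [coeff_eq_zero_of_natDegree_lt (by rwa [charpoly_natDegree_eq_dim])]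
    exact MvPolynomial.isHomogeneous_zero _ _ _

theorem IsHomogeneous.aeval_divX_iterate_charpoly (hM : M.IsHomogeneous a) (r : ℕ) :
    (aeval M (divX^[r] M.charpoly)).IsHomogeneous (a * (Fintype.card ι - r)) := by
  rw [aeval_eq_sum_range]
  intro i l
  simp only [sum_apply, smul_apply, smul_eq_mul, coeff_divX_iterate]
  refine MvPolynomial.IsHomogeneous.sum _ _ _ fun j _ => ?_
  rcases le_or_gt (j + r) (Fintype.card ι) with hj | hj
  · convert (hM.coeff_charpoly (j + r)).mul (hM.pow j i l) using 1
    rw [← mul_add]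
    congr 1
    omega
  · rw [coeff_eq_zero_of_natDegree_lt (by rwa [charpoly_natDegree_eq_dim]), zero_mul]
    exact MvPolynomial.isHomogeneous_zero _ _ _

end CommRing

end Matrix

section HomogeneousSymbols

variable {V W : Type*} [NormedAddCommGroup V] [NormedSpace ℝ V] [NormedAddCommGroup W]
  [NormedSpace ℝ W]
  {ι κ : Type*} [Fintype ι] [DecidableEq ι] [Fintype κ] (b : Basis ι ℝ V) (b' : Basis κ ℝ W)
  {n m : ℕ} {f : EuclideanSpace ℝ (Fin n) → V →L[ℝ] W}

theorem exists_isHomogeneous_map_eval_eq_toMatrix {c : (Fin n → ℕ) → V →L[ℝ] W}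
    (hf : ∀ ξ, f ξ = ∑ α ∈ Finset.Nat.antidiagonalTuple n m, (∏ i, ξ i ^ α i) • c α) :
    ∃ P : Matrix κ ι (MvPolynomial (Fin n) ℝ), P.IsHomogeneous m ∧
      ∀ ξ : EuclideanSpace ℝ (Fin n),
        P.map (MvPolynomial.eval ξ) = LinearMap.toMatrix b b' (f ξ) := by
  refine ⟨.of fun i j => MvPolynomial.homogeneousOfCoeffs m fun α =>
    LinearMap.toMatrix b b' (c α) i j, fun i j => MvPolynomial.isHomogeneous_homogeneousOfCoeffs _,
    fun ξ => ?_⟩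
  ext i j
  simp [MvPolynomial.eval_homogeneousOfCoeffs, hf, Matrix.sum_apply]

variable [FiniteDimensional ℝ V]

theorem exists_eq_sum_of_toMatrix_eq_map_eval {P : Matrix κ ι (MvPolynomial (Fin n) ℝ)}
    (hP : P.IsHomogeneous m)
    (hf : ∀ ξ : EuclideanSpace ℝ (Fin n),
      LinearMap.toMatrix b b' (f ξ) = P.map (MvPolynomial.eval ξ)) :
    ∃ c : (Fin n → ℕ) → V →L[ℝ] W,
      ∀ ξ, f ξ = ∑ α ∈ Finset.Nat.antidiagonalTuple n m, (∏ i, ξ i ^ α i) • c α := by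
  let toCLM : Matrix κ ι ℝ →ₗ[ℝ] V →L[ℝ] W :=
    LinearMap.toContinuousLinearMap.toLinearMap ∘ₗ (Matrix.toLin b b').toLinearMap
  refine ⟨fun α => toCLM (P.map (MvPolynomial.coeff (Finsupp.equivFunOnFinite.symm α))),
    fun ξ => ?_⟩
  have h : f ξ = toCLM (LinearMap.toMatrix b b' (f ξ)) := by
    ext
    simp [toCLM]
  rw [h, hf, hP.map_eval_eq_sum, map_sum]
  simp only [map_smul]

end HomogeneousSymbols

theorem statement11_general
    {V E : Type*} [NormedAddCommGroup V] [InnerProductSpace ℝ V] [FiniteDimensional ℝ V]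
    [NormedAddCommGroup E] [InnerProductSpace ℝ E] [FiniteDimensional ℝ E]
    {n k : ℕ}
    (A : EuclideanSpace ℝ (Fin n) → (V →L[ℝ] E))
    (Ac : (Fin n → ℕ) → (V →L[ℝ] E))
    (hA : ∀ ξ, A ξ = ∑ α ∈ Finset.Nat.antidiagonalTuple n k, (∏ i, ξ i ^ α i) • Ac α) :
    ∃ (m : ℕ) (Bc : (Fin n → ℕ) → (V →L[ℝ] V))
      (B : EuclideanSpace ℝ (Fin n) → (V →L[ℝ] V)),
      (∀ ξ, B ξ = ∑ α ∈ Finset.Nat.antidiagonalTuple n m, (∏ i, ξ i ^ α i) • Bc α) ∧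
      (∀ ξ, (A ξ).comp (B ξ) = 0) ∧
      ∃ r : ℕ,
        IsGreatest {d | ∃ ξ, d = Module.finrank ℝ (LinearMap.range (B ξ : V →ₗ[ℝ] V))} r ∧
        IsLeast {d | ∃ ξ, d = Module.finrank ℝ (LinearMap.ker (A ξ : V →ₗ[ℝ] E))} r := by
  obtain ⟨r, ⟨ξ₀, hξ₀⟩, hr⟩ : ∃ r, IsLeast
      {d | ∃ ξ, d = Module.finrank ℝ (LinearMap.ker (A ξ : V →ₗ[ℝ] E))} r :=
    ⟨_, Nat.sInf_mem ⟨_, 0, rfl⟩, fun _ h => Nat.sInf_le h⟩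
  have hrξ : ∀ ξ, r ≤ finrank ℝ (LinearMap.ker (A ξ : V →ₗ[ℝ] E)) := fun ξ => hr ⟨ξ, rfl⟩
  let bV := stdOrthonormalBasis ℝ V
  let bE := stdOrthonormalBasis ℝ E
  let B ξ := LinearMap.toContinuousLinearMap ((A ξ : V →ₗ[ℝ] E).gramCharpolyQuot r)
  obtain ⟨𝓐, h𝓐, h𝓐eval⟩ := exists_isHomogeneous_map_eval_eq_toMatrix bV.toBasis bE.toBasis hA
  let 𝓑 := aeval (𝓐.transpose * 𝓐) (divX^[r] (𝓐.transpose * 𝓐).charpoly)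
  have h𝓑eval ξ : LinearMap.toMatrix bV.toBasis bV.toBasis (B ξ) = 𝓑.map (MvPolynomial.eval ξ) := by
    rw [Matrix.map_aeval_divX_iterate_charpoly, Matrix.map_mul, Matrix.transpose_map, h𝓐eval,
      LinearMap.coe_toContinuousLinearMap, LinearMap.toMatrix_gramCharpolyQuot bV bE,
      Matrix.conjTranspose_eq_transpose_of_trivial]
  obtain ⟨Bc, hBc⟩ := exists_eq_sum_of_toMatrix_eq_map_eval bV.toBasis bV.toBasis
    ((h𝓐.transpose.mul h𝓐).aeval_divX_iterate_charpoly r) h𝓑eval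
  refine ⟨_, Bc, B, hBc, fun ξ => ?_, r, ⟨⟨ξ₀, ?_⟩, ?_⟩, ⟨ξ₀, hξ₀⟩, hr⟩
  · exact ContinuousLinearMap.coe_injective (LinearMap.comp_gramCharpolyQuot (hrξ ξ))
  · rw [LinearMap.coe_toContinuousLinearMap, LinearMap.finrank_range_gramCharpolyQuot (hrξ ξ₀),
      if_pos hξ₀.symm]
  · rintro _ ⟨ξ, rfl⟩
    rw [LinearMap.coe_toContinuousLinearMap, LinearMap.finrank_range_gramCharpolyQuot (hrξ ξ)]
    split_ifs <;> omega

/-- Lemma: algebraic existence of a compatible operator `B`.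
Given the symbol `A(ξ) = ∑_{|α|=k} ξ^α A_α` of a homogeneous operator of order `k`,
there are `m ∈ ℕ` and a map `B : ℝⁿ → 𝓛(V; V)` whose entries are homogeneous polynomials
of degree `m` (i.e. `B(ξ) = ∑_{|α|=m} ξ^α B_α`) with `A(ξ) ∘ B(ξ) = 0` for all `ξ` and
`max_ξ dim B(ξ)[V] = min_ξ dim ker A(ξ)`. -/
theorem statement11
    {V E : Type*} [NormedAddCommGroup V] [InnerProductSpace ℝ V] [FiniteDimensional ℝ V]
    [NormedAddCommGroup E] [InnerProductSpace ℝ E] [FiniteDimensional ℝ E]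
    {n k : ℕ} (hn : 0 < n) (hk : 0 < k)
    (A : EuclideanSpace ℝ (Fin n) → (V →L[ℝ] E))
    (Ac : (Fin n → ℕ) → (V →L[ℝ] E))
    (hA : ∀ ξ, A ξ = ∑ α ∈ Finset.Nat.antidiagonalTuple n k, (∏ i, ξ i ^ α i) • Ac α) :
    ∃ (m : ℕ) (Bc : (Fin n → ℕ) → (V →L[ℝ] V))
      (B : EuclideanSpace ℝ (Fin n) → (V →L[ℝ] V)),
      (∀ ξ, B ξ = ∑ α ∈ Finset.Nat.antidiagonalTuple n m, (∏ i, ξ i ^ α i) • Bc α) ∧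
      (∀ ξ, (A ξ).comp (B ξ) = 0) ∧
      ∃ r : ℕ,
        IsGreatest {d | ∃ ξ, d = Module.finrank ℝ (LinearMap.range (B ξ : V →ₗ[ℝ] V))} r ∧
        IsLeast {d | ∃ ξ, d = Module.finrank ℝ (LinearMap.ker (A ξ : V →ₗ[ℝ] E))} r :=
  statement11_general A Ac hA
end
end

section
/- Let b, c ∈ ℝⁿ \ {0} and set J = { x ∈ ℝⁿ : |b · x| ≤ |c · x| }. If |b · c| < |b|², then for every nonnegative function f ∈ L¹(ℝⁿ), ∫_{J} ∫_{ℝ} f(x + t b) / |x| dt dx ≤ 2 |b| √(|b|²|c|² − (b·c)²) / (|b|⁴ − (b·c)²) · ∫_{ℝⁿ} f(x) dx. -/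
/-!
By Tonelli and the translation `x ↦ x + t b`, the left side equals `∫ f(z) Φ(z) dz` with
`Φ(z) = ∫_{t : z - t b ∈ J} dt / |z - t b|`. For fixed `z` the condition
`|b·(z - t b)| ≤ |c·(z - t b)|` is a quadratic inequality in `t` with leading coefficient
`D = |b|⁴ - (b·c)² > 0`, so it confines `t` to an interval of length `2K/D`, where
`K = |(b·z)(b·c) - (c·z)|b|²|`, `K²` being its reduced discriminant. Since
`K = |⟨|b|² c - (b·c) b, z - t b⟩|` and `|b|² c - (b·c) b ⊥ b`, Cauchy–Schwarz gives
`K ≤ |b| √(|b|²|c|² - (b·c)²) |z - t b|` for every `t`, hence `Φ(z) ≤ 2|b|√(|b|²|c|² - (b·c)²)/D`.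
-/

open MeasureTheory ENNReal
open scoped NNReal RealInnerProductSpace

noncomputable section

theorem setOf_abs_sub_mul_le_abs_sub_mul_subset_Icc {α β B G : ℝ} (hD : 0 < B ^ 2 - G ^ 2) :
    {t : ℝ | |α - t * B| ≤ |β - t * G|} ⊆
      Set.Icc ((α * B - β * G - |α * G - β * B|) / (B ^ 2 - G ^ 2))
        ((α * B - β * G + |α * G - β * B|) / (B ^ 2 - G ^ 2)) := by
  intro t ht
  have hsq : (α - t * B) ^ 2 ≤ (β - t * G) ^ 2 := sq_le_sq.mpr ht
  have hsquare : ((B ^ 2 - G ^ 2) * t - (α * B - β * G)) ^ 2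
      = (B ^ 2 - G ^ 2) * ((α - t * B) ^ 2 - (β - t * G) ^ 2) + |α * G - β * B| ^ 2 := by
    rw [sq_abs]; ring
  have hle : ((B ^ 2 - G ^ 2) * t - (α * B - β * G)) ^ 2 ≤ |α * G - β * B| ^ 2 := by
    rw [hsquare]
    linarith [mul_nonpos_of_nonneg_of_nonpos hD.le (sub_nonpos.mpr hsq)]
  obtain ⟨hlo, hhi⟩ := abs_le_of_sq_le_sq' hle (abs_nonneg _)
  constructor
  · rw [div_le_iff₀ hD]; linarith
  · rw [le_div_iff₀ hD]; linarith

theorem volume_setOf_abs_sub_mul_le_abs_sub_mul_le {α β B G : ℝ} (hD : 0 < B ^ 2 - G ^ 2) :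
    volume {t : ℝ | |α - t * B| ≤ |β - t * G|}
      ≤ ENNReal.ofReal (2 * |α * G - β * B| / (B ^ 2 - G ^ 2)) := by
  refine (measure_mono (setOf_abs_sub_mul_le_abs_sub_mul_subset_Icc hD)).trans ?_
  rw [Real.volume_Icc]
  exact ENNReal.ofReal_le_ofReal (le_of_eq (by ring))

section InnerProductSpace

variable {E : Type*} [NormedAddCommGroup E] [InnerProductSpace ℝ E]

theorem norm_norm_sq_smul_sub_inner_smul (b c : E) :
    ‖‖b‖ ^ 2 • c - ⟪b, c⟫ • b‖ = ‖b‖ * √(‖b‖ ^ 2 * ‖c‖ ^ 2 - ⟪b, c⟫ ^ 2) := by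
  have hsq : ‖‖b‖ ^ 2 • c - ⟪b, c⟫ • b‖ ^ 2
      = ‖b‖ ^ 2 * (‖b‖ ^ 2 * ‖c‖ ^ 2 - ⟪b, c⟫ ^ 2) := by
    rw [norm_sub_sq_real, norm_smul, norm_smul, real_inner_smul_left, real_inner_smul_right,
      real_inner_comm c b, Real.norm_eq_abs, Real.norm_eq_abs, abs_of_nonneg (sq_nonneg _)]
    ring_nf
    rw [sq_abs]
    ring
  rw [← Real.sqrt_sq (norm_nonneg (_ : E)), hsq, Real.sqrt_mul (sq_nonneg _),
    Real.sqrt_sq (norm_nonneg _)]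

theorem abs_inner_mul_inner_sub_inner_mul_le (b c z : E) (t : ℝ) :
    |⟪b, z⟫ * ⟪b, c⟫ - ⟪c, z⟫ * ‖b‖ ^ 2|
      ≤ ‖b‖ * √(‖b‖ ^ 2 * ‖c‖ ^ 2 - ⟪b, c⟫ ^ 2) * ‖z - t • b‖ := by
  have hpair : ⟪b, z⟫ * ⟪b, c⟫ - ⟪c, z⟫ * ‖b‖ ^ 2
      = -⟪‖b‖ ^ 2 • c - ⟪b, c⟫ • b, z - t • b⟫ := by
    simp only [inner_sub_left, inner_sub_right, real_inner_smul_left, real_inner_smul_right,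
      real_inner_self_eq_norm_sq, real_inner_comm b c]
    ring
  rw [hpair, abs_neg, ← norm_norm_sq_smul_sub_inner_smul]
  exact abs_real_inner_le_norm _ _

theorem setLIntegral_inv_nnnorm_sub_smul_le (b c z : E) (hbc : |⟪b, c⟫| < ‖b‖ ^ 2) :
    ∫⁻ t in {t : ℝ | |⟪b, z - t • b⟫| ≤ |⟪c, z - t • b⟫|}, (‖z - t • b‖₊ : ℝ≥0∞)⁻¹
      ≤ ENNReal.ofReal
          (2 * ‖b‖ * √(‖b‖ ^ 2 * ‖c‖ ^ 2 - ⟪b, c⟫ ^ 2) / (‖b‖ ^ 4 - ⟪b, c⟫ ^ 2)) := by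
  set A := ‖b‖ * √(‖b‖ ^ 2 * ‖c‖ ^ 2 - ⟪b, c⟫ ^ 2)
  set K := |⟪b, z⟫ * ⟪b, c⟫ - ⟪c, z⟫ * ‖b‖ ^ 2|
  set T := {t : ℝ | |⟪b, z - t • b⟫| ≤ |⟪c, z - t • b⟫|}
  have hD : 0 < (‖b‖ ^ 2) ^ 2 - ⟪b, c⟫ ^ 2 := by
    nlinarith [abs_nonneg ⟪b, c⟫, sq_abs ⟪b, c⟫]
  have hvol : volume T ≤ ENNReal.ofReal (2 * K / ((‖b‖ ^ 2) ^ 2 - ⟪b, c⟫ ^ 2)) := by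
    convert volume_setOf_abs_sub_mul_le_abs_sub_mul_le (α := ⟪b, z⟫) (β := ⟪c, z⟫) hD using 3
    simp only [inner_sub_right, real_inner_smul_right, real_inner_self_eq_norm_sq,
      real_inner_comm b c]
  rcases (show 0 ≤ K from abs_nonneg _).eq_or_lt with hK | hK
  · rw [← hK, mul_zero, zero_div, ENNReal.ofReal_zero, nonpos_iff_eq_zero] at hvol
    rw [setLIntegral_measure_zero _ _ hvol]
    exact zero_le
  have hpt : ∀ t : ℝ, (‖z - t • b‖₊ : ℝ≥0∞)⁻¹ ≤ ENNReal.ofReal (A / K) := by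
    intro t
    have hKA := abs_inner_mul_inner_sub_inner_mul_le b c z t
    have hpos : 0 < ‖z - t • b‖ := pos_of_mul_pos_right (hK.trans_le hKA) (by positivity)
    rw [← ENNReal.ofReal_coe_nnreal, coe_nnnorm, ← ENNReal.ofReal_inv_of_pos hpos]
    refine ENNReal.ofReal_le_ofReal ((inv_le_iff_one_le_mul₀ hpos).mpr ?_)
    rw [div_mul_eq_mul_div, one_le_div hK]
    exact hKA
  calc ∫⁻ t in T, (‖z - t • b‖₊ : ℝ≥0∞)⁻¹
      ≤ ∫⁻ _ in T, ENNReal.ofReal (A / K) := lintegral_mono hpt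
    _ = ENNReal.ofReal (A / K) * volume T := setLIntegral_const _ _
    _ ≤ ENNReal.ofReal (A / K) * ENNReal.ofReal (2 * K / ((‖b‖ ^ 2) ^ 2 - ⟪b, c⟫ ^ 2)) := by
      gcongr
    _ = _ := by
      rw [← ENNReal.ofReal_mul (by positivity)]
      congr 1
      simp only [A]
      field_simp

end InnerProductSpace

section Shear

variable {E : Type*} [NormedAddCommGroup E] [NormedSpace ℝ E] [MeasurableSpace E] [BorelSpace E]
  {μ : Measure E} [μ.IsAddRightInvariant] [SFinite μ] {ν : Measure ℝ} [SFinite ν]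

theorem quasiMeasurePreserving_add_smul (b : E) :
    Measure.QuasiMeasurePreserving (fun p : E × ℝ => p.1 + p.2 • b) (μ.prod ν) μ := by
  have hmeas : Measurable fun p : E × ℝ => p.1 + p.2 • b :=
    (continuous_fst.add (continuous_snd.smul continuous_const)).measurable
  refine ⟨hmeas, Measure.AbsolutelyContinuous.mk fun s hs hμs => ?_⟩
  rw [Measure.map_apply hmeas hs, Measure.prod_apply_symm (hs.preimage hmeas)]
  simp_rw [Set.preimage_preimage, measure_preimage_add_right, hμs, lintegral_zero]

theorem lintegral_mul_lintegral_add_smul_le {F : E → ℝ≥0∞} (hF : AEMeasurable F μ)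
    {h : E → ℝ≥0∞} (hh : Measurable h) (b : E) :
    ∫⁻ x, (∫⁻ t, F (x + t • b) ∂ν) * h x ∂μ ≤ ∫⁻ z, F z * ∫⁻ t, h (z - t • b) ∂ν ∂μ := by
  have hsub : Measurable fun p : E × ℝ => p.1 - p.2 • b :=
    (continuous_fst.sub (continuous_snd.smul continuous_const)).measurable
  have hswap : AEMeasurable (fun p : E × ℝ => F p.1 * h (p.1 - p.2 • b)) (μ.prod ν) :=
    (hF.comp_quasiMeasurePreserving Measure.quasiMeasurePreserving_fst).mul
      (hh.comp hsub).aemeasurable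
  calc ∫⁻ x, (∫⁻ t, F (x + t • b) ∂ν) * h x ∂μ
      ≤ ∫⁻ x, ∫⁻ t, F (x + t • b) * h x ∂ν ∂μ :=
        lintegral_mono fun x => lintegral_mul_const_le _ _
    _ = ∫⁻ t, ∫⁻ x, F (x + t • b) * h x ∂μ ∂ν :=
        lintegral_lintegral_swap ((hF.comp_quasiMeasurePreserving
          (quasiMeasurePreserving_add_smul b)).mul (hh.comp measurable_fst).aemeasurable)
    _ = ∫⁻ t, ∫⁻ z, F z * h (z - t • b) ∂μ ∂ν := by
        congr with t
        simpa using lintegral_add_right_eq_self (μ := μ) (fun z => F z * h (z - t • b)) (t • b)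
    _ = ∫⁻ z, ∫⁻ t, F z * h (z - t • b) ∂ν ∂μ :=
        (lintegral_lintegral_swap hswap).symm
    _ = ∫⁻ z, F z * ∫⁻ t, h (z - t • b) ∂ν ∂μ := by
        congr with z
        exact lintegral_const_mul _ (hh.comp (by fun_prop : Continuous fun t : ℝ => z - t • b).measurable)

end Shear

theorem statement14_general
    {n : ℕ}
    (b c : EuclideanSpace ℝ (Fin n))
    (hbc : |⟪b, c⟫| < ‖b‖ ^ 2)
    (f : EuclideanSpace ℝ (Fin n) → ℝ) (hf : Integrable f) :
    ∫⁻ x in {x : EuclideanSpace ℝ (Fin n) | |⟪b, x⟫| ≤ |⟪c, x⟫|},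
        (∫⁻ t : ℝ, ENNReal.ofReal (f (x + t • b))) / (‖x‖₊ : ℝ≥0∞)
      ≤ ENNReal.ofReal
          (2 * ‖b‖ * Real.sqrt (‖b‖ ^ 2 * ‖c‖ ^ 2 - ⟪b, c⟫ ^ 2) / (‖b‖ ^ 4 - ⟪b, c⟫ ^ 2))
        * ∫⁻ x, ENNReal.ofReal (f x) := by
  set J := {x : EuclideanSpace ℝ (Fin n) | |⟪b, x⟫| ≤ |⟪c, x⟫|}
  set h := J.indicator fun x : EuclideanSpace ℝ (Fin n) => (‖x‖₊ : ℝ≥0∞)⁻¹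
  have hJ : MeasurableSet J := measurableSet_le (by fun_prop) (by fun_prop)
  have hh : Measurable h := (by fun_prop : Measurable _).indicator hJ
  calc _ = ∫⁻ x, (∫⁻ t : ℝ, ENNReal.ofReal (f (x + t • b))) * h x := by
        rw [← lintegral_indicator hJ]
        congr with x
        by_cases hx : x ∈ J <;> simp [h, hx, div_eq_mul_inv]
    _ ≤ ∫⁻ z, ENNReal.ofReal (f z) * ∫⁻ t : ℝ, h (z - t • b) :=
        lintegral_mul_lintegral_add_smul_le hf.1.aemeasurable.ennreal_ofReal hh b
    _ ≤ ∫⁻ z, ENNReal.ofReal (f z) * ENNReal.ofReal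
          (2 * ‖b‖ * Real.sqrt (‖b‖ ^ 2 * ‖c‖ ^ 2 - ⟪b, c⟫ ^ 2) / (‖b‖ ^ 4 - ⟪b, c⟫ ^ 2)) := by
        gcongr with z
        show ∫⁻ t, ((fun t : ℝ => z - t • b) ⁻¹' J).indicator
          (fun t => (‖z - t • b‖₊ : ℝ≥0∞)⁻¹) t ≤ _
        rw [lintegral_indicator (hJ.preimage (by fun_prop))]
        exact setLIntegral_inv_nnnorm_sub_smul_le b c z hbc
    _ = _ := by rw [lintegral_mul_const' _ _ ENNReal.ofReal_ne_top, mul_comm]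

/-- Lemma: averaging along lines over the cone `|b·x| ≤ |c·x|`.
For `b, c ∈ ℝⁿ \ {0}` with `|b·c| < |b|²`, `J = {x : |b·x| ≤ |c·x|}` and every
nonnegative `f ∈ L¹(ℝⁿ)`,
`∫_J ∫_ℝ f(x+tb)/|x| dt dx ≤ 2|b|√(|b|²|c|²−(b·c)²)/(|b|⁴−(b·c)²) ∫ f`. -/
theorem statement14
    {n : ℕ} (hn : 0 < n)
    (b c : EuclideanSpace ℝ (Fin n)) (hb : b ≠ 0) (hc : c ≠ 0)
    (hbc : |⟪b, c⟫| < ‖b‖ ^ 2)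
    (f : EuclideanSpace ℝ (Fin n) → ℝ) (hf0 : ∀ x, 0 ≤ f x) (hf : Integrable f) :
    ∫⁻ x in {x : EuclideanSpace ℝ (Fin n) | |⟪b, x⟫| ≤ |⟪c, x⟫|},
        (∫⁻ t : ℝ, ENNReal.ofReal (f (x + t • b))) / (‖x‖₊ : ℝ≥0∞)
      ≤ ENNReal.ofReal
          (2 * ‖b‖ * Real.sqrt (‖b‖ ^ 2 * ‖c‖ ^ 2 - ⟪b, c⟫ ^ 2) / (‖b‖ ^ 4 - ⟪b, c⟫ ^ 2))
        * ∫⁻ x, ENNReal.ofReal (f x) :=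
  statement14_general b c hbc f hf
end
end

section
/- There exists a constant C > 0 such that for every u ∈ C_c^∞(ℝ³), ∫_{ℝ³} |u(x)| / |x| dx ≤ C ∫_{ℝ³} ( |∂_1 u(x)| + |∂_2 u(x)| ) dx. (In particular, the scalar Hardy inequality can hold for the non-elliptic operator (∂_1, ∂_2) on ℝ³.) -/
open MeasureTheory ENNReal
open scoped NNReal RealInnerProductSpace

noncomputable section

/-!
Integrating `∂ᵢu` along the line through `x` in direction `eᵢ` gives
`|u(x)| ≤ ∫ |∂ᵢu(x + t eᵢ)| dt`, a bound that does not depend on `xᵢ`. On the wedge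
`|xᵢ| ≤ |xⱼ|` we have `|x| ≥ |xⱼ|`, so there `|u(x)|/|x|` is at most this line integral divided by
`|xⱼ|`. Integrating first in `xᵢ`, over a slice of the wedge of length `2|xⱼ|`, cancels the weight,
and Fubini leaves `2 ∫ |∂ᵢu|`. The wedges for `(i, j) = (1, 2)` and `(2, 1)` cover `ℝ³`.
-/

open Function

section LineIntegral

variable {E F : Type*} [NormedAddCommGroup E] [NormedSpace ℝ E]
  [NormedAddCommGroup F] [NormedSpace ℝ F] {u : E → F}

theorem HasCompactSupport.enorm_le_lintegral_enorm_fderiv_line (h2u : HasCompactSupport u)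
    (hu : ContDiff ℝ 1 u) {v : E} (hv : v ≠ 0) (x : E) :
    ‖u x‖ₑ ≤ ∫⁻ t : ℝ, ‖fderiv ℝ u (x + t • v) v‖ₑ := by
  set line : ℝ → E := fun t => x + t • v
  have hline : ∀ t, HasDerivAt line v t := fun t =>
    (((hasDerivAt_id t).smul_const v).const_add x).congr_deriv (one_smul ℝ v)
  have hderiv : ∀ t, deriv (u ∘ line) t = fderiv ℝ u (line t) v := fun t => by
    rw [fderiv_comp_deriv t (hu.differentiable one_ne_zero _) (hline t).differentiableAt,
      (hline t).deriv]
  have hclosed : Topology.IsClosedEmbedding line :=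
    (Homeomorph.addLeft x).isClosedEmbedding.comp (isClosedEmbedding_smul_left hv)
  calc ‖u x‖ₑ = ‖(u ∘ line) 0‖ₑ := by simp [line]
    _ ≤ ∫⁻ t in Set.Iic 0, ‖deriv (u ∘ line) t‖ₑ :=
      (h2u.comp_isClosedEmbedding hclosed).enorm_le_lintegral_Ici_deriv
        (hu.comp (by fun_prop)) 0
    _ ≤ ∫⁻ t, ‖fderiv ℝ u (line t) v‖ₑ := by
      simp_rw [hderiv]
      exact setLIntegral_le_lintegral _ _

end LineIntegral

section Coordinates

variable {ι : Type*} [DecidableEq ι]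

theorem EuclideanSpace.toLp_update (y : ι → ℝ) (i : ι) (t : ℝ) :
    WithLp.toLp 2 (update y i t) = WithLp.toLp 2 y + (t - y i) • EuclideanSpace.single i 1 := by
  ext j
  by_cases h : j = i
  · subst h; simp
  · simp [h]

variable [Fintype ι] {F : Type*} [NormedAddCommGroup F] [NormedSpace ℝ F]
  {u : EuclideanSpace ℝ ι → F}

theorem HasCompactSupport.enorm_le_lmarginal_enorm_fderiv (h2u : HasCompactSupport u)
    (hu : ContDiff ℝ 1 u) (i : ι) (y : ι → ℝ) :
    ‖u (WithLp.toLp 2 y)‖ₑ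
      ≤ (∫⋯∫⁻_{i}, fun y => ‖fderiv ℝ u (WithLp.toLp 2 y) (EuclideanSpace.single i 1)‖ₑ) y := by
  rw [lmarginal_singleton]
  simp_rw [EuclideanSpace.toLp_update]
  rw [lintegral_sub_right_eq_self (fun t => ‖fderiv ℝ u
    (WithLp.toLp 2 y + t • EuclideanSpace.single i 1) (EuclideanSpace.single i 1)‖ₑ) (y i)]
  exact h2u.enorm_le_lintegral_enorm_fderiv_line hu (by simp) _

end Coordinates

section Wedge

variable {ι : Type*} {i j : ι} {F F' : (ι → ℝ) → ℝ≥0∞}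

def wedgeQuotient (i j : ι) (F : (ι → ℝ) → ℝ≥0∞) : (ι → ℝ) → ℝ≥0∞ :=
  {y | ‖y i‖ ≤ ‖y j‖}.indicator fun y => F y / ‖y j‖ₑ

theorem Measurable.wedgeQuotient (hF : Measurable F) :
    Measurable (wedgeQuotient i j F) :=
  (hF.div (measurable_pi_apply j).enorm).indicator
    (measurableSet_le (measurable_pi_apply i).norm (measurable_pi_apply j).norm)

theorem wedgeQuotient_of_le {y : ι → ℝ} (h : ‖y i‖ ≤ ‖y j‖) :
    wedgeQuotient i j F y = F y / ‖y j‖ₑ :=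
  Set.indicator_of_mem (s := {y : ι → ℝ | ‖y i‖ ≤ ‖y j‖}) h _

theorem div_le_wedgeQuotient_add_wedgeQuotient {y : ι → ℝ}
    {a N : ℝ≥0∞} (hF : a ≤ F y) (hF' : a ≤ F' y) (hi : ‖y i‖ₑ ≤ N) (hj : ‖y j‖ₑ ≤ N) :
    a / N ≤ wedgeQuotient i j F y + wedgeQuotient j i F' y := by
  rcases le_total ‖y i‖ ‖y j‖ with h | h
  · exact le_add_right ((wedgeQuotient_of_le h).symm ▸ ENNReal.div_le_div hF hj)
  · exact le_add_left ((wedgeQuotient_of_le h).symm ▸ ENNReal.div_le_div hF' hi)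

variable [DecidableEq ι]

theorem lmarginal_wedgeQuotient_lmarginal_le (hij : i ≠ j) (F : (ι → ℝ) → ℝ≥0∞) :
    (∫⋯∫⁻_{i}, wedgeQuotient i j (∫⋯∫⁻_{i}, F)) ≤ ∫⋯∫⁻_{i}, 2 * F := by
  intro y
  set G := ∫⋯∫⁻_{i}, F
  have hslice : ∀ s : ℝ, wedgeQuotient i j G (update y i s)
      = (Metric.closedBall 0 ‖y j‖).indicator (fun _ => G y / ‖y j‖ₑ) s := fun s => by
    classical
    simp only [wedgeQuotient, Set.indicator_apply, Set.mem_ofPred_eq, mem_closedBall_zero_iff,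
      update_self, update_of_ne hij.symm, G,
      lmarginal_update_of_mem _ (Finset.mem_singleton_self i)]
  calc (∫⋯∫⁻_{i}, wedgeQuotient i j G) y
      = G y / ‖y j‖ₑ * volume (Metric.closedBall (0 : ℝ) ‖y j‖) := by
        simp_rw [lmarginal_singleton, hslice]
        rw [lintegral_indicator_const Metric.isClosed_closedBall.measurableSet]
    _ = 2 * (‖y j‖ₑ * (G y / ‖y j‖ₑ)) := by
        rw [Real.volume_closedBall, ENNReal.ofReal_mul zero_le_two, ofReal_norm]
        simp only [ENNReal.ofReal_ofNat]
        ring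
    _ ≤ 2 * G y := by gcongr; exact ENNReal.mul_div_le
    _ = (∫⋯∫⁻_{i}, 2 * F) y := by
        simp only [G, lmarginal_singleton, Pi.mul_apply, Pi.ofNat_apply]
        exact (lintegral_const_mul' 2 _ ofNat_ne_top).symm

variable [Fintype ι]

theorem lintegral_wedgeQuotient_lmarginal_le (hij : i ≠ j) (hF : Measurable F) :
    ∫⁻ y, wedgeQuotient i j (∫⋯∫⁻_{i}, F) y ≤ 2 * ∫⁻ y, F y := by
  rw [← lintegral_const_mul 2 hF]
  exact lintegral_le_of_lmarginal_le (μ := fun _ => volume) {i} (hF.lmarginal _).wedgeQuotient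
    (hF.const_mul 2) (lmarginal_wedgeQuotient_lmarginal_le hij F)

end Wedge

theorem HasCompactSupport.lintegral_enorm_div_enorm_le {ι : Type*} [Fintype ι] [DecidableEq ι]
    {F : Type*} [NormedAddCommGroup F] [NormedSpace ℝ F] {u : EuclideanSpace ℝ ι → F}
    (h2u : HasCompactSupport u) (hu : ContDiff ℝ 1 u) {i j : ι} (hij : i ≠ j) :
    ∫⁻ x, ‖u x‖ₑ / ‖x‖ₑ ≤ 2 * ∫⁻ x, (‖fderiv ℝ u x (EuclideanSpace.single i 1)‖ₑ
      + ‖fderiv ℝ u x (EuclideanSpace.single j 1)‖ₑ) := by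
  set D : ι → (ι → ℝ) → ℝ≥0∞ := fun k y =>
    ‖fderiv ℝ u (WithLp.toLp 2 y) (EuclideanSpace.single k 1)‖ₑ
  have hD : ∀ k, Measurable (D k) := fun k =>
    (((hu.continuous_fderiv one_ne_zero).comp (PiLp.continuous_toLp 2 _)).clm_apply
      continuous_const).enorm.measurable
  have htoLp := PiLp.volume_preserving_toLp ι
  have hemb := (MeasurableEquiv.toLp 2 (ι → ℝ)).measurableEmbedding
  rw [← htoLp.lintegral_comp_emb hemb, ← htoLp.lintegral_comp_emb hemb]
  calc ∫⁻ y, ‖u (WithLp.toLp 2 y)‖ₑ / ‖WithLp.toLp 2 y‖ₑ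
      ≤ ∫⁻ y, (wedgeQuotient i j (∫⋯∫⁻_{i}, D i) y + wedgeQuotient j i (∫⋯∫⁻_{j}, D j) y) :=
        lintegral_mono fun y => div_le_wedgeQuotient_add_wedgeQuotient
          (h2u.enorm_le_lmarginal_enorm_fderiv hu i y) (h2u.enorm_le_lmarginal_enorm_fderiv hu j y)
          (PiLp.enorm_apply_le _ i) (PiLp.enorm_apply_le _ j)
    _ = (∫⁻ y, wedgeQuotient i j (∫⋯∫⁻_{i}, D i) y) + ∫⁻ y, wedgeQuotient j i (∫⋯∫⁻_{j}, D j) y :=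
        lintegral_add_left ((hD i).lmarginal _).wedgeQuotient _
    _ ≤ 2 * (∫⁻ y, D i y) + 2 * ∫⁻ y, D j y :=
        add_le_add (lintegral_wedgeQuotient_lmarginal_le hij (hD i))
          (lintegral_wedgeQuotient_lmarginal_le hij.symm (hD j))
    _ = 2 * ∫⁻ y, (D i y + D j y) := by rw [lintegral_add_left (hD i), mul_add]

/-- Hardy inequality for the non-elliptic operator `(∂₁, ∂₂)` on `ℝ³`.
There is `C > 0` such that for every `u ∈ C_c^∞(ℝ³)`,
`∫ |u(x)|/|x| dx ≤ C ∫ (|∂₁u(x)| + |∂₂u(x)|) dx`. -/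
theorem statement18 :
    ∃ C : ℝ, 0 < C ∧
      ∀ u : EuclideanSpace ℝ (Fin 3) → ℝ, IsTestFun u →
        ∫⁻ x, (‖u x‖₊ : ℝ≥0∞) / (‖x‖₊ : ℝ≥0∞)
          ≤ ENNReal.ofReal C *
            ∫⁻ x, ((‖fderiv ℝ u x (EuclideanSpace.single 0 (1 : ℝ))‖₊ : ℝ≥0∞)
              + (‖fderiv ℝ u x (EuclideanSpace.single 1 (1 : ℝ))‖₊ : ℝ≥0∞)) := by
  refine ⟨2, two_pos, fun u ⟨hu, h2u⟩ => ?_⟩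
  simpa only [ENNReal.ofReal_ofNat, enorm_eq_nnnorm] using
    h2u.lintegral_enorm_div_enorm_le (hu.of_le (by exact_mod_cast le_top))
      (show (0 : Fin 3) ≠ 1 by decide)
end
end

section
/- Let n be a positive integer, V a finite-dimensional real inner product space and j ∈ ℕ. There exists a constant C > 0 such that for every u ∈ C_c^∞(ℝⁿ; V), |D^j u(0)| ≤ C ∫_{ℝⁿ} |D^{j+1} u(x)| / |x|^{n−1} dx. -/
open MeasureTheory ENNReal
open scoped NNReal RealInnerProductSpace

noncomputable section

/-!
Along every ray from the origin, the fundamental theorem of calculus bounds `|D^j u(0)|` by the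
integral of `|D^{j+1} u|` over the ray. Averaging over the unit sphere and passing to polar
coordinates `dx = t^{n-1} dt dσ`, the Jacobian `t^{n-1}` is exactly cancelled by the weight
`|x|^{1-n}`, which gives the estimate with `C = 1 / σ(S^{n-1})`.
-/

open Set Metric Topology

theorem enorm_coe_sphere_one {E : Type*} [SeminormedAddCommGroup E] (ω : sphere (0 : E) 1) :
    ‖(ω : E)‖ₑ = 1 := by
  rw [← ofReal_norm, mem_sphere_zero_iff_norm.1 ω.2, ENNReal.ofReal_one]

section RayIntegral

variable {E F : Type*} [NormedAddCommGroup E] [NormedSpace ℝ E]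
  [NormedAddCommGroup F] [NormedSpace ℝ F]

theorem HasCompactSupport.enorm_le_lintegral_Ioi_fderiv {u : E → F} (hu : ContDiff ℝ 1 u)
    (h'u : HasCompactSupport u) (x : E) {ω : E} (hω : ω ≠ 0) :
    ‖u x‖ₑ ≤ ∫⁻ t in Ioi (0 : ℝ), ‖fderiv ℝ u (x + t • ω)‖ₑ * ‖ω‖ₑ := by
  -- `HasCompactSupport.enorm_le_lintegral_Ici_deriv` integrates over `Iic`: run the ray backwards.
  set ray : ℝ → E := fun s => x - s • ω
  have hray : IsClosedEmbedding ray :=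
    (Homeomorph.subLeft x).isClosedEmbedding.comp (isClosedEmbedding_smul_left hω)
  have hray_deriv : ∀ s, HasDerivAt ray (-ω) s := fun s => by
    simpa using ((hasDerivAt_id s).smul_const ω).const_sub x
  have hmeas : Measurable fun t : ℝ => ‖fderiv ℝ u (x + t • ω)‖ₑ * ‖ω‖ₑ :=
    ((hu.continuous_fderiv one_ne_zero).comp (by fun_prop)).enorm.measurable.mul_const _
  calc ‖u x‖ₑ = ‖(u ∘ ray) 0‖ₑ := by simp [ray]
    _ ≤ ∫⁻ s in Iic 0, ‖deriv (u ∘ ray) s‖ₑ :=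
      HasCompactSupport.enorm_le_lintegral_Ici_deriv
        (hu.comp (contDiff_const.sub (contDiff_id.smul contDiff_const)))
        (h'u.comp_isClosedEmbedding hray) 0
    _ ≤ ∫⁻ s in Iic (0 : ℝ), ‖fderiv ℝ u (x + (-s) • ω)‖ₑ * ‖ω‖ₑ := by
      gcongr with s
      rw [fderiv_comp_deriv _ ((hu.differentiable one_ne_zero) _) (hray_deriv s).differentiableAt,
        (hray_deriv s).deriv]
      simpa [ray, sub_eq_add_neg] using (fderiv ℝ u (x - s • ω)).le_opENorm (-ω)
    _ = ∫⁻ t in Ioi (0 : ℝ), ‖fderiv ℝ u (x + t • ω)‖ₑ * ‖ω‖ₑ := by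
      rw [← show Neg.neg ⁻¹' Ici (0 : ℝ) = Iic 0 by simp,
        (Measure.measurePreserving_neg volume).setLIntegral_comp_preimage measurableSet_Ici hmeas,
        setLIntegral_congr Ioi_ae_eq_Ici]

end RayIntegral

section PolarCoordinates

variable {E F : Type*} [NormedAddCommGroup E] [NormedSpace ℝ E] [FiniteDimensional ℝ E]
  [MeasurableSpace E] [BorelSpace E] [NormedAddCommGroup F] [NormedSpace ℝ F]

theorem MeasureTheory.lintegral_eq_lintegral_toSphere_lintegral_Ioi (μ : Measure E)
    [μ.IsAddHaarMeasure] [Nontrivial E] {G : E → ℝ≥0∞} (hG : Measurable G) :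
    ∫⁻ x, G x ∂μ = ∫⁻ ω, (∫⁻ t in Ioi (0 : ℝ),
      ENNReal.ofReal (t ^ (Module.finrank ℝ E - 1)) * G (t • (ω : E))) ∂μ.toSphere := by
  have hGpolar : Measurable fun p : sphere (0 : E) 1 × Ioi (0 : ℝ) => G ((p.2 : ℝ) • (p.1 : E)) :=
    hG.comp (by fun_prop)
  calc ∫⁻ x, G x ∂μ = ∫⁻ x : ({0}ᶜ : Set E), G x ∂(μ.comap Subtype.val) := by
        rw [lintegral_subtype_comap (measurableSet_singleton 0).compl, restrict_compl_singleton]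
    _ = ∫⁻ p, G ((p.2 : ℝ) • (p.1 : E))
          ∂(μ.toSphere.prod (Measure.volumeIoiPow (Module.finrank ℝ E - 1))) := by
        rw [← (μ.measurePreserving_homeomorphUnitSphereProd).lintegral_comp hGpolar]
        refine lintegral_congr fun x => ?_
        simp [smul_smul, mul_inv_cancel₀ (norm_ne_zero_iff.2 x.2)]
    _ = _ := by
        rw [lintegral_prod _ hGpolar.aemeasurable]
        refine lintegral_congr fun ω => ?_
        have hGray : Measurable fun t : Ioi (0 : ℝ) => G ((t : ℝ) • (ω : E)) :=
          hG.comp (by fun_prop)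
        rw [Measure.volumeIoiPow, lintegral_withDensity_eq_lintegral_mul _ (by fun_prop) hGray]
        exact lintegral_subtype_comap measurableSet_Ioi
          (fun t : ℝ => ENNReal.ofReal (t ^ (Module.finrank ℝ E - 1)) * G (t • (ω : E)))

theorem MeasureTheory.toSphere_univ_mul_enorm_le_lintegral_fderiv (μ : Measure E)
    [μ.IsAddHaarMeasure] {u : E → F} (hu : ContDiff ℝ 1 u) (h'u : HasCompactSupport u) :
    μ.toSphere univ * ‖u 0‖ₑ ≤ ∫⁻ x, ‖fderiv ℝ u x‖ₑ / ‖x‖ₑ ^ (Module.finrank ℝ E - 1) ∂μ := by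
  rcases subsingleton_or_nontrivial E with hE | _
  · simp [(Measure.toSphere_eq_zero_iff μ).2 hE]
  have hG : Measurable fun x : E => ‖fderiv ℝ u x‖ₑ / ‖x‖ₑ ^ (Module.finrank ℝ E - 1) :=
    (hu.continuous_fderiv one_ne_zero).enorm.measurable.div (by fun_prop)
  rw [lintegral_eq_lintegral_toSphere_lintegral_Ioi μ hG]
  calc μ.toSphere univ * ‖u 0‖ₑ = ∫⁻ _, ‖u 0‖ₑ ∂μ.toSphere := by rw [lintegral_const, mul_comm]
    _ ≤ ∫⁻ ω, (∫⁻ t in Ioi (0 : ℝ), ‖fderiv ℝ u (t • (ω : E))‖ₑ) ∂μ.toSphere := by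
      refine lintegral_mono fun ω => ?_
      simpa [enorm_coe_sphere_one] using
        h'u.enorm_le_lintegral_Ioi_fderiv hu 0 (ne_zero_of_mem_unit_sphere ω)
    _ = _ := by
      refine lintegral_congr fun ω => setLIntegral_congr_fun measurableSet_Ioi fun t ht => ?_
      rw [enorm_smul, enorm_coe_sphere_one, mul_one, Real.enorm_of_nonneg ht.out.le,
        ← ENNReal.ofReal_pow ht.out.le,
        ENNReal.mul_div_cancel (by simpa using pow_pos ht.out _) ENNReal.ofReal_ne_top]

end PolarCoordinates

theorem statement19_general
    {V : Type*} [NormedAddCommGroup V] [InnerProductSpace ℝ V]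
    {n : ℕ} (hn : 0 < n) (j : ℕ) :
    ∃ C : ℝ, 0 < C ∧ ∀ u : EuclideanSpace ℝ (Fin n) → V, IsTestFun u →
      (‖iteratedFDeriv ℝ j u 0‖₊ : ℝ≥0∞)
        ≤ ENNReal.ofReal C *
          ∫⁻ x, (‖iteratedFDeriv ℝ (j + 1) u x‖₊ : ℝ≥0∞)
            / (‖x‖₊ : ℝ≥0∞) ^ ((n : ℝ) - 1) := by
  have hdim : Module.finrank ℝ (EuclideanSpace ℝ (Fin n)) = n := finrank_euclideanSpace_fin
  have : Nontrivial (EuclideanSpace ℝ (Fin n)) :=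
    Module.nontrivial_of_finrank_pos (R := ℝ) (by rwa [hdim])
  set σ := (volume : Measure (EuclideanSpace ℝ (Fin n))).toSphere
  have hσ : σ univ ≠ 0 := Measure.measure_univ_ne_zero.2 (Measure.toSphere_ne_zero volume)
  have hσ' : σ univ ≠ ∞ := measure_ne_top σ univ
  refine ⟨(σ univ).toReal⁻¹, inv_pos.2 (ENNReal.toReal_pos hσ hσ'), fun u ⟨hu, h'u⟩ => ?_⟩
  have hbound := toSphere_univ_mul_enorm_le_lintegral_fderiv volume
    (hu.iteratedFDeriv_right (m := 1) (i := j) (by exact_mod_cast le_top))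
    (h'u.iteratedFDeriv j)
  rw [ENNReal.ofReal_inv_of_pos (ENNReal.toReal_pos hσ hσ'), ENNReal.ofReal_toReal hσ',
    ← ENNReal.mul_le_iff_le_inv hσ hσ']
  have hintegrand (x : EuclideanSpace ℝ (Fin n)) :
      ‖fderiv ℝ (iteratedFDeriv ℝ j u) x‖ₑ
          / ‖x‖ₑ ^ (Module.finrank ℝ (EuclideanSpace ℝ (Fin n)) - 1) =
        ‖iteratedFDeriv ℝ (j + 1) u x‖ₑ / ‖x‖ₑ ^ ((n : ℝ) - 1) := by
    rw [← ofReal_norm, norm_fderiv_iteratedFDeriv, ofReal_norm, hdim, ← Nat.cast_pred hn,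
      ENNReal.rpow_natCast]
  rw [lintegral_congr hintegrand] at hbound
  simpa only [enorm_eq_nnnorm] using hbound

/-- Pointwise estimate by a Riesz-type potential of the next derivative.
For every `n ≥ 1` and `j ∈ ℕ` there is `C > 0` such that for all `u ∈ C_c^∞(ℝⁿ; V)`,
`|D^j u(0)| ≤ C ∫ |D^{j+1}u(x)|/|x|^{n−1} dx`. -/
theorem statement19
    {V : Type*} [NormedAddCommGroup V] [InnerProductSpace ℝ V] [FiniteDimensional ℝ V]
    {n : ℕ} (hn : 0 < n) (j : ℕ) :
    ∃ C : ℝ, 0 < C ∧ ∀ u : EuclideanSpace ℝ (Fin n) → V, IsTestFun u →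
      (‖iteratedFDeriv ℝ j u 0‖₊ : ℝ≥0∞)
        ≤ ENNReal.ofReal C *
          ∫⁻ x, (‖iteratedFDeriv ℝ (j + 1) u x‖₊ : ℝ≥0∞)
            / (‖x‖₊ : ℝ≥0∞) ^ ((n : ℝ) - 1) :=
  statement19_general hn j
end
end
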